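/- Let R be a Noetherian local ring with maximal ideal 𝔪_R and residue field k = R/𝔪_R, let C• be a good complex of R-modules, and let f : F• → C• be a quasi-isomorphism where F• is a minimal complex. Then for each i ∈ ℤ there is an isomorphism F^i ⊗_R k ≅ H^i(C• ⊗_R k). In particular, F^i ≠ 0 if and only if H^i(C• ⊗_R k) ≠ 0. -/

import Mathlib

/-! Bounded-above complexes of projectives are K-projective, so the quasi-isomorphism `f` between
two good complexes is a homotopy equivalence. Reduction modulo `𝔪_R` is an additive functor, hence
preserves homotopy equivalences, so `H^i(C ⊗ k) ≅ H^i(F ⊗ k)`; the latter is `F^i ⊗ k` because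
`F ⊗ k` has zero differentials. Nakayama's lemma then gives `F^i ≠ 0 ↔ F^i ⊗ k ≠ 0`. -/

open CategoryTheory

section QuotientMachinery

variable (R : Type) [CommRing R]

/-- The functor `M ↦ M/IM` on `R`-modules (i.e. `- ⊗_R R/I`). -/
noncomputable def qMod (I : Ideal R) : ModuleCat R ⥤ ModuleCat R where
  obj M := ModuleCat.of R (M ⧸ (I • (⊤ : Submodule R M)))
  map {M N} f := ModuleCat.ofHom
    (Submodule.mapQ _ _ f.hom (Submodule.smul_top_le_comap_smul_top I f.hom))
  map_id M := by
    exact ModuleCat.hom_ext (Submodule.linearMap_qext _ (LinearMap.ext fun y => rfl))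
  map_comp {M N P} f g := by
    exact ModuleCat.hom_ext (Submodule.linearMap_qext _ (LinearMap.ext fun y => rfl))

instance (I : Ideal R) : (qMod R I).Additive := by
  constructor
  intro M N f g
  exact ModuleCat.hom_ext (Submodule.linearMap_qext _ (LinearMap.ext fun y => rfl))

/-- Reduction of a cochain complex of `R`-modules modulo an ideal `I`,
i.e. the complex `C ⊗_R R/I`. -/
noncomputable def qCx (I : Ideal R) :
    CochainComplex (ModuleCat R) ℤ ⥤ CochainComplex (ModuleCat R) ℤ :=
  (qMod R I).mapHomologicalComplex _

/-- The natural reduction map `M ⟶ M/IM`. -/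
noncomputable def qPi (I : Ideal R) : 𝟭 (ModuleCat R) ⟶ qMod R I where
  app M := ModuleCat.ofHom (Submodule.mkQ _ : M →ₗ[R] _)
  naturality M N f := by
    ext x
    rfl

/-- The natural reduction chain map `C ⟶ C ⊗_R R/I`. -/
noncomputable def qRed (I : Ideal R) (C : CochainComplex (ModuleCat R) ℤ) :
    C ⟶ (qCx R I).obj C :=
  (NatTrans.mapHomologicalComplex (qPi R I) (ComplexShape.up ℤ)).app C

end QuotientMachinery

/-- A good complex of `R`-modules: a bounded cochain complex of finitely generated
projective `R`-modules. -/
def IsGoodComplex (R : Type) [CommRing R] (C : CochainComplex (ModuleCat R) ℤ) : Prop :=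
  (∃ a b : ℤ, ∀ i : ℤ, (i < a ∨ b < i) → Limits.IsZero (C.X i)) ∧
  (∀ i : ℤ, Module.Finite R (C.X i)) ∧ (∀ i : ℤ, Module.Projective R (C.X i))

/-- A minimal complex: a good complex all of whose differentials vanish after reduction
modulo the maximal ideal, i.e. all differentials of `C ⊗_R R/𝔪_R` are zero. -/
def IsMinimalComplex (R : Type) [CommRing R] [IsLocalRing R]
    (C : CochainComplex (ModuleCat R) ℤ) : Prop :=
  IsGoodComplex R C ∧
  ∀ i j : ℤ, ((qCx R (IsLocalRing.maximalIdeal R)).obj C).d i j = 0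

open Limits

theorem Submodule.subsingleton_quotient_smul_top_iff {R M : Type*} [CommRing R]
    [AddCommGroup M] [Module R M] [Module.Finite R M] {I : Ideal R}
    (hI : I ≤ (⊥ : Ideal R).jacobson) :
    Subsingleton (M ⧸ (I • ⊤ : Submodule R M)) ↔ Subsingleton M := by
  refine ⟨fun h ↦ ?_, fun _ ↦ inferInstance⟩
  rw [Submodule.Quotient.subsingleton_iff] at h
  by_contra hM
  rw [not_subsingleton_iff_nontrivial] at hM
  exact top_ne_ideal_smul_of_le_jacobson_annihilator (hI.trans (Ideal.jacobson_mono bot_le)) h.symm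

variable {R : Type} [CommRing R]

theorem isZero_qMod_obj_iff {I : Ideal R} (hI : I ≤ (⊥ : Ideal R).jacobson) (M : ModuleCat R)
    [Module.Finite R M] : IsZero ((qMod R I).obj M) ↔ IsZero M := by
  simp only [ModuleCat.isZero_iff_subsingleton]
  exact Submodule.subsingleton_quotient_smul_top_iff hI

namespace IsGoodComplex

variable {C F : CochainComplex (ModuleCat R) ℤ}

theorem isKProjective (hC : IsGoodComplex R C) : C.IsKProjective := by
  obtain ⟨⟨_, b, hb⟩, -, hproj⟩ := hC
  have : C.IsStrictlyLE b := (C.isStrictlyLE_iff b).2 fun i hi ↦ hb i (Or.inr hi)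
  exact CochainComplex.isKProjective_of_projective C b

theorem nonempty_homotopyEquiv_of_quasiIso (hF : IsGoodComplex R F) (hC : IsGoodComplex R C)
    (f : F ⟶ C) [QuasiIso f] : Nonempty (HomotopyEquiv F C) := by
  have := hF.isKProjective
  have := hC.isKProjective
  obtain ⟨e, -⟩ := (CochainComplex.IsKProjective.quasiIso_iff f).1 inferInstance
  exact ⟨e⟩

end IsGoodComplex

theorem statement_4_general (R : Type) [CommRing R] [IsLocalRing R]
    (C F : CochainComplex (ModuleCat R) ℤ) (hC : IsGoodComplex R C)
    (hF : IsMinimalComplex R F) (f : F ⟶ C) (hf : QuasiIso f) (i : ℤ) :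
    Nonempty ((↥((qMod R (IsLocalRing.maximalIdeal R)).obj (F.X i))) ≃ₗ[R]
        ↥(((qCx R (IsLocalRing.maximalIdeal R)).obj C).homology i)) ∧
    (¬ Limits.IsZero (F.X i) ↔
      ¬ Limits.IsZero (((qCx R (IsLocalRing.maximalIdeal R)).obj C).homology i)) := by
  let k := qMod R (IsLocalRing.maximalIdeal R)
  let F' := (qCx R (IsLocalRing.maximalIdeal R)).obj F
  obtain ⟨e⟩ := hF.1.nonempty_homotopyEquiv_of_quasiIso hC f
  let homologyIsoX : F'.homology i ≅ k.obj (F.X i) :=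
    (F'.isoHomologyπ (i - 1) i (by simp) (hF.2 _ _)).symm ≪≫
      F'.iCyclesIso i (i + 1) (by simp) (hF.2 _ _)
  let iso : k.obj (F.X i) ≅ ((qCx R (IsLocalRing.maximalIdeal R)).obj C).homology i :=
    homologyIsoX.symm ≪≫ (k.mapHomotopyEquiv e).toHomologyIso i
  have := hF.1.2.1 i
  refine ⟨⟨iso.toLinearEquiv⟩, ?_⟩
  rw [not_iff_not, ← iso.isZero_iff, isZero_qMod_obj_iff (IsLocalRing.maximalIdeal_le_jacobson ⊥)]

theorem statement_4 (R : Type) [CommRing R] [IsNoetherianRing R] [IsLocalRing R]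
    (C F : CochainComplex (ModuleCat R) ℤ) (hC : IsGoodComplex R C)
    (hF : IsMinimalComplex R F) (f : F ⟶ C) (hf : QuasiIso f) (i : ℤ) :
    Nonempty ((↥((qMod R (IsLocalRing.maximalIdeal R)).obj (F.X i))) ≃ₗ[R]
        ↥(((qCx R (IsLocalRing.maximalIdeal R)).obj C).homology i)) ∧
    (¬ Limits.IsZero (F.X i) ↔
      ¬ Limits.IsZero (((qCx R (IsLocalRing.maximalIdeal R)).obj C).homology i)) :=
  statement_4_general R C F hC hF f hf i
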